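/- arXiv:1110.0620 — 3 statements merged into one kernel-verified Lean document; each statement's English description precedes it below -/
import Mathlib

section
/- In a weighted complete graph on n vertices (n even, n ≥ 4) with symmetric weights satisfying the triangle inequality, there exists a vertex v* such that the sum of d(v, v*) over all v ≠ v* is at most nτ/4, where τ is the length of a shortest Hamiltonian cycle. -/
/-!
Fix a shortest Hamiltonian cycle `c`. By the triangle inequality along the cycle, the pairs of
vertices at cyclic distance `k` have total distance at most `min k (n - k) · τ`, and summing over
`k` bounds the total distance over all ordered pairs by `n² τ / 4`. A vertex minimising the
sum of distances to the others does at most the average, i.e. at most `n τ / 4`.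
-/

open Finset

theorem sum_range_min_sub_add_two (n : ℕ) :
    ∑ k ∈ range (n + 2), min k (n + 2 - k) = ∑ k ∈ range n, min k (n - k) + (n + 1) := by
  have hshift : ∀ k ∈ range (n + 1), min (k + 1) (n + 2 - (k + 1)) = min k (n - k) + 1 := by
    intro k hk
    rw [show n + 2 - (k + 1) = n - k + 1 by grind, Nat.succ_min_succ]
  rw [sum_range_succ', sum_congr rfl hshift, sum_add_distrib, sum_range_succ]
  simp

theorem four_mul_sum_range_min_sub_le_sq : ∀ n : ℕ, 4 * ∑ k ∈ range n, min k (n - k) ≤ n ^ 2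
  | 0 => by simp
  | 1 => by simp
  | n + 2 => by
    have := four_mul_sum_range_min_sub_le_sq n
    rw [sum_range_min_sub_add_two]
    nlinarith

theorem exists_card_mul_le_sum {V : Type*} [Fintype V] [Nonempty V] (f : V → ℝ) :
    ∃ w, Fintype.card V * f w ≤ ∑ v, f v := by
  obtain ⟨w, -, hw⟩ := exists_le_of_sum_le (s := univ)
    (f := fun w => Fintype.card V * f w) (g := fun _ => ∑ v, f v) univ_nonempty
    (by simp [← mul_sum])
  exact ⟨w, hw⟩

section Cycle

open Fin.NatCast

variable {V : Type*} (d : V → V → ℝ) {n : ℕ} [NeZero n] (c : Fin n → V)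

def cycleLength : ℝ := ∑ i, d (c i) (c (i + 1))

def stepSum (k : Fin n) : ℝ := ∑ i, d (c i) (c (i + k))

theorem cycleLength_nonneg (hnonneg : ∀ u v, 0 ≤ d u v) : 0 ≤ cycleLength d c :=
  sum_nonneg fun _ _ => hnonneg _ _

theorem stepSum_zero (hdiag : ∀ v, d v v = 0) : stepSum d c 0 = 0 := by
  simp [stepSum, hdiag]

theorem stepSum_add_one_le (htri : ∀ u v w, d u w ≤ d u v + d v w) (k : Fin n) :
    stepSum d c (k + 1) ≤ stepSum d c k + cycleLength d c := by
  have hrotate : ∑ i, d (c (i + k)) (c (i + k + 1)) = cycleLength d c :=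
    Fintype.sum_equiv (Equiv.addRight k) _ _ fun _ => rfl
  calc stepSum d c (k + 1)
      ≤ ∑ i, (d (c i) (c (i + k)) + d (c (i + k)) (c (i + k + 1))) :=
        sum_le_sum fun i _ => by rw [← add_assoc]; exact htri _ _ _
    _ = stepSum d c k + cycleLength d c := by rw [sum_add_distrib, hrotate, stepSum]

theorem stepSum_natCast_le (hdiag : ∀ v, d v v = 0) (htri : ∀ u v w, d u w ≤ d u v + d v w) :
    ∀ m : ℕ, stepSum d c m ≤ m * cycleLength d c
  | 0 => by simp [stepSum_zero d c hdiag]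
  | m + 1 => by
    have := stepSum_natCast_le hdiag htri m
    push_cast
    linarith [stepSum_add_one_le d c htri m]

theorem stepSum_neg (hsymm : ∀ u v, d u v = d v u) (k : Fin n) :
    stepSum d c (-k) = stepSum d c k := by
  unfold stepSum
  rw [← Fintype.sum_equiv (Equiv.addRight k) (fun i => d (c (i + k)) (c (i + k + -k))) _
    fun _ => rfl]
  simp only [add_neg_cancel_right]
  exact sum_congr rfl fun i _ => hsymm _ _

theorem stepSum_le_min_mul (hdiag : ∀ v, d v v = 0) (hsymm : ∀ u v, d u v = d v u)
    (htri : ∀ u v w, d u w ≤ d u v + d v w) (k : Fin n) :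
    stepSum d c k ≤ (min (k : ℕ) (n - k) : ℕ) * cycleLength d c := by
  rcases eq_or_ne k 0 with rfl | hk
  · simp [stepSum_zero d c hdiag]
  have hforward : stepSum d c k ≤ (k : ℕ) * cycleLength d c := by
    simpa only [Fin.cast_val_eq_self] using stepSum_natCast_le d c hdiag htri k
  have hbackward : stepSum d c k ≤ (n - k : ℕ) * cycleLength d c := by
    have := stepSum_natCast_le d c hdiag htri (-k : Fin n)
    rwa [Fin.cast_val_eq_self, stepSum_neg d c hsymm, Fin.val_neg, if_neg hk] at this
  rcases min_choice (k : ℕ) (n - k) with h | h <;> rw [h] <;> assumption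

theorem sum_sum_eq_sum_stepSum [Fintype V] (c : Fin n ≃ V) :
    ∑ u, ∑ v, d u v = ∑ k, stepSum d c k := by
  calc ∑ u, ∑ v, d u v = ∑ i, ∑ k, d (c i) (c (i + k)) := by
        rw [← c.sum_comp]
        refine sum_congr rfl fun i _ => ?_
        rw [← c.sum_comp]
        exact (Fintype.sum_equiv (Equiv.addLeft i) _ _ fun _ => rfl).symm
    _ = ∑ k, stepSum d c k := sum_comm

theorem sum_sum_le_sq_div_four_mul [Fintype V] (hdiag : ∀ v, d v v = 0)
    (hsymm : ∀ u v, d u v = d v u) (hnonneg : ∀ u v, 0 ≤ d u v)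
    (htri : ∀ u v w, d u w ≤ d u v + d v w) (c : Fin n ≃ V) :
    ∑ u, ∑ v, d u v ≤ (n : ℝ) ^ 2 / 4 * cycleLength d c := by
  have hmin : (4 : ℝ) * ∑ k ∈ range n, ((min k (n - k) : ℕ) : ℝ) ≤ (n : ℝ) ^ 2 := by
    exact_mod_cast four_mul_sum_range_min_sub_le_sq n
  calc ∑ u, ∑ v, d u v = ∑ k, stepSum d c k := sum_sum_eq_sum_stepSum d c
    _ ≤ ∑ k : Fin n, (min (k : ℕ) (n - k) : ℕ) * cycleLength d c :=
        sum_le_sum fun k _ => stepSum_le_min_mul d c hdiag hsymm htri k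
    _ = (∑ k ∈ range n, (min k (n - k) : ℕ) : ℝ) * cycleLength d c := by
        rw [← sum_mul, Fin.sum_univ_eq_sum_range (fun k => ((min k (n - k) : ℕ) : ℝ))]
    _ ≤ (n : ℝ) ^ 2 / 4 * cycleLength d c := by
        gcongr
        · exact cycleLength_nonneg d c hnonneg
        · linarith

end Cycle

theorem stmt_3_general {V : Type*} [Fintype V] [DecidableEq V] (n : ℕ) [NeZero n]
    (hcard : Fintype.card V = n) (d : V → V → ℝ)
    (hdiag : ∀ v, d v v = 0)
    (hsymm : ∀ u v, d u v = d v u)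
    (hnonneg : ∀ u v, 0 ≤ d u v)
    (htri : ∀ u v w, d u w ≤ d u v + d v w)
    (τ : ℝ)
    (hτ : IsLeast {L : ℝ | ∃ c : Fin n ≃ V, L = ∑ i : Fin n, d (c i) (c (i + 1))} τ) :
    ∃ vstar : V, ∑ v ∈ Finset.univ.erase vstar, d v vstar ≤ (n : ℝ) * τ / 4 := by
  obtain ⟨⟨c, rfl⟩, -⟩ := hτ
  have : Nonempty V := ⟨c 0⟩
  obtain ⟨vstar, hvstar⟩ := exists_card_mul_le_sum fun w => ∑ u, d u w
  refine ⟨vstar, ?_⟩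
  rw [sum_erase (f := fun v => d v vstar) _ (hdiag vstar)]
  have hn : (0 : ℝ) < n := by exact_mod_cast NeZero.pos n
  refine le_of_mul_le_mul_left ?_ hn
  calc (n : ℝ) * ∑ u, d u vstar ≤ ∑ w, ∑ u, d u w := by rwa [← hcard]
    _ = ∑ u, ∑ w, d u w := sum_comm
    _ ≤ (n : ℝ) ^ 2 / 4 * cycleLength d c :=
        sum_sum_le_sq_div_four_mul d hdiag hsymm hnonneg htri c
    _ = n * (n * cycleLength d c / 4) := by ring

theorem stmt_3 {V : Type*} [Fintype V] [DecidableEq V] (n : ℕ) [NeZero n] (hn : 4 ≤ n) (hev : Even n)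
    (hcard : Fintype.card V = n) (d : V → V → ℝ)
    (hdiag : ∀ v, d v v = 0)
    (hsymm : ∀ u v, d u v = d v u)
    (hnonneg : ∀ u v, 0 ≤ d u v)
    (htri : ∀ u v w, d u w ≤ d u v + d v w)
    (τ : ℝ)
    (hτ : IsLeast {L : ℝ | ∃ c : Fin n ≃ V, L = ∑ i : Fin n, d (c i) (c (i + 1))} τ) :
    ∃ vstar : V, ∑ v ∈ Finset.univ.erase vstar, d v vstar ≤ (n : ℝ) * τ / 4 :=
  stmt_3_general n hcard d hdiag hsymm hnonneg htri τ hτ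
end

section
/- Under Assumption A, the total traveling distance of the schedule K*_DRR is at most (n−2)τ' + 2·Σ_{v ≠ v*} d(v,v*) + (3/2)τ + nτ/2, where τ' is the length of the constructed cycle on V∖{v*} and τ is the length of a shortest Hamiltonian cycle on V. -/
/-- Circle-method single round-robin schedule: opponent of team `t` in slot `s`. -/
def Kstar (n t s : ℕ) : ℕ :=
  if t = n - 1 then (if s % 2 = 0 then s / 2 else (s + n - 1) / 2)
  else
    let r := ((((s : ℤ) - (t : ℤ)) % ((n : ℤ) - 1)).toNat)
    if r = t then n - 1 else r

/-- Home/away assignment of the mirrored double round-robin `K*_DRR`: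
`true` iff team `t` plays home in slot `s ∈ {0,…,2n-3}`. -/
def Home (n t s : ℕ) : Bool :=
  if t < n / 2 then decide (2 * t ≤ s ∧ s ≤ n + 2 * t - 2)
  else if t ≤ n - 2 then !(decide (2 * t - n + 2 ≤ s ∧ s ≤ 2 * t))
  else decide (n - 1 ≤ s)

/-- Venue at which team `t` plays in slot `s ∈ {0,…,2n-3}` of `K*_DRR`:
its own venue for a home game, the opponent's venue for an away game. -/
def loc {V : Type*} (n : ℕ) (venue : ℕ → V) (t s : ℕ) : V :=
  if Home n t s = true then venue t else venue (Kstar n t (s % (n - 1)))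

/-!
Read each team's schedule cyclically, starting at its last home game. Team `t < n - 1` then
stays home for `n - 1` slots and visits the other venues in the cyclic order `v_0, …, v_{n-2}`
of `τ'`, with `v*` spliced in next to its own venue; so its tour is `τ'` plus the cost of
inserting `v*` into one edge of that cycle (edge `t` if `t < n/2`, edge `t - 1` otherwise).
The teams therefore insert `v*` once into every edge except the closing edge `(v_{n-2}, v_0)`
and twice into the edge `(v_{n/2-1}, v_{n/2})`. Inserting `v*` into every edge of the cycle costs
`2 Σ d(v, v*) - τ'`, and every distance is at most `τ/2` because the two arcs of an optimal
Hamiltonian cycle join any two venues; this bounds the doubled insertion by `τ` and the `n`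
moves of team `n - 1` by `n τ / 2`.
-/

open Finset Fin.NatCast

section Tours

variable {V : Type*} (d : V → V → ℝ)

def pathLength (f : ℕ → V) (k : ℕ) : ℝ :=
  ∑ i ∈ range k, d (f i) (f (i + 1))

def tourLength (N : ℕ) (g : ℕ → V) : ℝ :=
  ∑ s ∈ range N, d (g s) (g ((s + 1) % N))

lemma pathLength_add (f : ℕ → V) (a b : ℕ) :
    pathLength d f (a + b) = pathLength d f a + pathLength d (fun i => f (a + i)) b := by
  simp only [pathLength, sum_range_add, add_assoc]

lemma pathLength_eq_zero (hdiag : ∀ v, d v v = 0) {f : ℕ → V} {k : ℕ} {v : V}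
    (hf : ∀ i ≤ k, f i = v) : pathLength d f k = 0 :=
  sum_eq_zero fun i hi => by
    rw [mem_range] at hi
    rw [hf i hi.le, hf (i + 1) hi, hdiag]

lemma pathLength_congr {f f' : ℕ → V} {k : ℕ} (h : ∀ i ≤ k, f i = f' i) :
    pathLength d f k = pathLength d f' k :=
  sum_congr rfl fun i hi => by
    rw [mem_range] at hi
    rw [h i hi.le, h (i + 1) hi]

lemma pathLength_two (f : ℕ → V) : pathLength d f 2 = d (f 0) (f 1) + d (f 1) (f 2) := by
  simp [pathLength, sum_range_succ]

lemma pathLength_add_of_const (hdiag : ∀ v, d v v = 0) {f : ℕ → V} {k l : ℕ}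
    (h : ∀ i ≤ l, f (k + i) = f k) : pathLength d f (k + l) = pathLength d f k := by
  rw [pathLength_add, pathLength_eq_zero d hdiag h, add_zero]

lemma pathLength_le {B : ℝ} (hB : ∀ u v, d u v ≤ B) (f : ℕ → V) (k : ℕ) :
    pathLength d f k ≤ k * B := by
  simpa [pathLength] using sum_le_card_nsmul (range k) _ B fun i _ => hB (f i) (f (i + 1))

lemma dist_le_pathLength (hdiag : ∀ v, d v v = 0) (htri : ∀ u v w, d u w ≤ d u v + d v w)
    (f : ℕ → V) (k : ℕ) : d (f 0) (f k) ≤ pathLength d f k := by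
  induction k with
  | zero => simp [pathLength, hdiag]
  | succ k ih =>
    rw [pathLength] at ih ⊢
    rw [sum_range_succ]
    linarith [htri (f 0) (f k) (f (k + 1))]

lemma dist_add_dist_le_pathLength (hdiag : ∀ v, d v v = 0)
    (htri : ∀ u v w, d u w ≤ d u v + d v w) (f : ℕ → V) {k N : ℕ} (hk : k ≤ N) :
    d (f 0) (f k) + d (f k) (f N) ≤ pathLength d f N := by
  obtain ⟨l, rfl⟩ := Nat.exists_eq_add_of_le hk
  rw [pathLength_add]
  exact add_le_add (dist_le_pathLength d hdiag htri f k)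
    (dist_le_pathLength d hdiag htri (fun i => f (k + i)) l)

lemma sum_range_rotate (F : ℕ → ℝ) (N a : ℕ) :
    ∑ s ∈ range N, F ((a + s) % N) = ∑ s ∈ range N, F s := by
  rcases N.eq_zero_or_pos with rfl | hN
  · simp
  have : NeZero N := ⟨hN.ne'⟩
  rw [← Fin.sum_univ_eq_sum_range, ← Fin.sum_univ_eq_sum_range]
  calc ∑ i : Fin N, F ((a + i) % N) = ∑ i : Fin N, F ↑((a : Fin N) + i) := by
        simp [Fin.val_add, Nat.mod_add_mod]
    _ = ∑ i : Fin N, F i := Equiv.sum_comp (Equiv.addLeft (a : Fin N)) (fun i => F i)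

lemma sum_range_rotate_pred (F : ℕ → ℝ) {N : ℕ} (hN : 0 < N) (a : ℕ) :
    ∑ x ∈ range (N - 1), F ((a + 1 + x) % N) = ∑ s ∈ range N, F s - F (a % N) := by
  rw [← sum_range_rotate F N a]
  obtain ⟨M, rfl⟩ := Nat.exists_eq_add_of_lt hN
  simp [sum_range_succ', add_assoc, add_comm 1]

lemma tourLength_eq_pathLength (N : ℕ) (g : ℕ → V) (a : ℕ) :
    tourLength d N g = pathLength d (fun i => g ((a + i) % N)) N := by
  rw [tourLength, ← sum_range_rotate _ N a]
  refine sum_congr rfl fun i _ => ?_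
  rw [Nat.mod_add_mod, add_assoc]

lemma pathLength_rotate (g : ℕ → V) {m : ℕ} (hm : 0 < m) (a : ℕ) :
    pathLength d (fun x => g ((a + 1 + x) % m)) (m - 1)
      = tourLength d m g - d (g (a % m)) (g ((a % m + 1) % m)) := by
  rw [tourLength, ← sum_range_rotate_pred (fun s => d (g s) (g ((s + 1) % m))) hm a, pathLength]
  refine sum_congr rfl fun x _ => ?_
  rw [Nat.mod_add_mod, add_assoc (a + 1) x 1]

def insertionCost (x y z : V) : ℝ := d x y + d y z - d x z

lemma insertionCost_nonneg (htri : ∀ u v w, d u w ≤ d u v + d v w) (x y z : V) :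
    0 ≤ insertionCost d x y z := by
  unfold insertionCost
  linarith [htri x y z]

lemma sum_insertionCost (hsymm : ∀ u v, d u v = d v u) (g : ℕ → V) (w : V) (m : ℕ) :
    ∑ k ∈ range m, insertionCost d (g k) w (g ((k + 1) % m))
      = 2 * ∑ k ∈ range m, d (g k) w - tourLength d m g := by
  have hrot : ∑ k ∈ range m, d w (g ((k + 1) % m)) = ∑ k ∈ range m, d (g k) w := by
    rw [← sum_range_rotate (fun k => d (g k) w) m 1]
    exact sum_congr rfl fun k _ => by rw [hsymm, add_comm]
  simp only [insertionCost, sum_sub_distrib, sum_add_distrib, hrot, tourLength]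
  ring

lemma dist_add_dist_le_sum_cycle (hdiag : ∀ v, d v v = 0)
    (htri : ∀ u v w, d u w ≤ d u v + d v w) {n : ℕ} [NeZero n] (c : Fin n → V)
    (a b : Fin n) :
    d (c a) (c b) + d (c b) (c a) ≤ ∑ i, d (c i) (c (i + 1)) := by
  set f : ℕ → V := fun k => c (a + k)
  have hsum : ∑ i, d (c i) (c (i + 1)) = pathLength d f n := by
    rw [pathLength, ← Fin.sum_univ_eq_sum_range (fun k => d (f k) (f (k + 1))),
      ← Equiv.sum_comp (Equiv.addLeft a)]
    refine sum_congr rfl fun i _ => ?_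
    simp [f, add_assoc]
  have hf0 : f 0 = c a := by simp [f]
  have hfb : f (b - a : Fin n) = c b := by simp [f]
  have hfn : f n = c a := by simp [f]
  rw [hsum]
  simpa [hf0, hfb, hfn] using dist_add_dist_le_pathLength d hdiag htri f (b - a).is_lt.le

lemma dist_le_half_sum_cycle (hdiag : ∀ v, d v v = 0) (hsymm : ∀ u v, d u v = d v u)
    (htri : ∀ u v w, d u w ≤ d u v + d v w) {n : ℕ} [NeZero n] (c : Fin n ≃ V) (u v : V) :
    d u v ≤ (∑ i, d (c i) (c (i + 1))) / 2 := by
  have := dist_add_dist_le_sum_cycle d hdiag htri c (c.symm u) (c.symm v)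
  rw [Equiv.apply_symm_apply, Equiv.apply_symm_apply, hsymm v u] at this
  linarith

end Tours

lemma sum_range_ite_pred (F : ℕ → ℝ) {p m : ℕ} (hpm : p < m) :
    ∑ t ∈ range m, F (if t < p then t else t - 1)
      = ∑ k ∈ range (m - 1), F k + F (p - 1) := by
  obtain ⟨q, rfl⟩ : ∃ q, m = p + (q + 1) := ⟨m - p - 1, by omega⟩
  have hlow : ∀ t ∈ range p, F (if t < p then t else t - 1) = F t := fun t ht => by
    rw [if_pos (mem_range.mp ht)]
  have hhigh : ∀ x, F (if p + (x + 1) < p then p + (x + 1) else p + (x + 1) - 1) = F (p + x) :=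
    fun x => by rw [if_neg (by omega), ← add_assoc, Nat.add_sub_cancel]
  rw [show p + (q + 1) - 1 = p + q by omega, sum_range_add F p q, sum_range_add _ p (q + 1),
    sum_range_succ', sum_congr rfl hlow]
  simp only [hhigh, add_zero, lt_irrefl, if_false]
  ring

lemma mod_two_mul_modEq (a N : ℕ) : a % (2 * N) ≡ a [MOD N] :=
  (Nat.mod_modEq a (2 * N)).of_mul_left 2

lemma mod_cases_of_lt_two_mul {a N : ℕ} (h : a < 2 * N) :
    a < N ∧ a % N = a ∨ N ≤ a ∧ a % N = a - N := by
  rcases lt_or_ge a N with h' | h'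
  · exact .inl ⟨h', Nat.mod_eq_of_lt h'⟩
  · exact .inr ⟨h', by rw [Nat.mod_eq_sub_mod h', Nat.mod_eq_of_lt (by omega)]⟩

section Schedule

variable {n : ℕ}

lemma kstar_of_modEq {t s y : ℕ} (ht : t < n - 1) (hy : y < n - 1)
    (hs : s ≡ 2 * t + y [MOD n - 1]) :
    Kstar n t (s % (n - 1)) = if y = 0 then n - 1 else (t + y) % (n - 1) := by
  have hr : ((((s % (n - 1) : ℕ) : ℤ) - t) % ((n : ℤ) - 1)).toNat = (t + y) % (n - 1) := by
    have hm : ((n : ℤ) - 1) = ((n - 1 : ℕ) : ℤ) := by omega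
    have h : ((s % (n - 1) : ℕ) : ℤ) - t ≡ ((t + y : ℕ) : ℤ) [ZMOD (n - 1 : ℕ)] := by
      have := (Int.natCast_modEq_iff.mpr ((Nat.mod_modEq s (n - 1)).trans hs)).sub_right (t : ℤ)
      convert this using 1
      push_cast
      ring
    rw [hm, h, ← Int.natCast_mod, Int.toNat_natCast]
  have hne : y ≠ 0 → (t + y) % (n - 1) ≠ t := by
    intro hy0
    have := mod_cases_of_lt_two_mul (show t + y < 2 * (n - 1) by omega)
    omega
  unfold Kstar
  rw [if_neg (by omega)]
  simp only [hr]
  by_cases hy0 : y = 0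
  · subst hy0
    simp [Nat.mod_eq_of_lt ht]
  · rw [if_neg (hne hy0), if_neg hy0]

lemma home_of_lt_half {t : ℕ} (ht : t < n / 2) (s : ℕ) :
    Home n t s = decide (2 * t ≤ s ∧ s ≤ n + 2 * t - 2) := by
  simp [Home, ht]

lemma home_of_half_le {t : ℕ} (ht₁ : n / 2 ≤ t) (ht₂ : t ≤ n - 2) (s : ℕ) :
    Home n t s = !decide (2 * t - n + 2 ≤ s ∧ s ≤ 2 * t) := by
  simp [Home, ht₂, not_lt.mpr ht₁]

lemma home_last (hn : 2 ≤ n) (s : ℕ) : Home n (n - 1) s = decide (n - 1 ≤ s) := by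
  simp only [Home, if_neg (show ¬ n - 1 < n / 2 by omega),
    if_neg (show ¬ n - 1 ≤ n - 2 by omega)]

variable {V : Type*} (venue : ℕ → V)

lemma loc_of_home {t s : ℕ} (h : Home n t s = true) : loc n venue t s = venue t := by
  simp [loc, h]

lemma loc_of_not_home {t s y : ℕ} (h : Home n t s = false) (ht : t < n - 1) (hy : y < n - 1)
    (hs : s ≡ 2 * t + y [MOD n - 1]) :
    loc n venue t s = venue (if y = 0 then n - 1 else (t + y) % (n - 1)) := by
  simp [loc, h, kstar_of_modEq ht hy hs]

lemma loc_of_lt_half_home {t j : ℕ} (ht : t < n / 2) (hj : j < n - 1) :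
    loc n venue t ((2 * t + j) % (2 * (n - 1))) = venue t := by
  refine loc_of_home venue ?_
  rw [home_of_lt_half ht, Nat.mod_eq_of_lt (by omega)]
  simp only [decide_eq_true_eq]
  omega

lemma loc_of_lt_half_away {t x : ℕ} (ht : t < n / 2) (hx : x < n - 1) :
    loc n venue t ((2 * t + (n - 1) + x) % (2 * (n - 1)))
      = venue (if x = 0 then n - 1 else (t + x) % (n - 1)) := by
  have hslot := mod_cases_of_lt_two_mul (show 2 * t + (n - 1) + x < 2 * (2 * (n - 1)) by omega)
  refine loc_of_not_home venue ?_ (by omega) hx ?_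
  · rw [home_of_lt_half ht]
    simp only [decide_eq_false_iff_not]
    omega
  · refine (mod_two_mul_modEq _ _).trans ?_
    rw [add_right_comm]
    exact Nat.add_modEq_right

lemma loc_of_half_le_home {t j : ℕ} (ht₁ : n / 2 ≤ t) (ht₂ : t ≤ n - 2) (hj : j < n - 1) :
    loc n venue t ((2 * t + 1 + j) % (2 * (n - 1))) = venue t := by
  have hslot := mod_cases_of_lt_two_mul (show 2 * t + 1 + j < 2 * (2 * (n - 1)) by omega)
  refine loc_of_home venue ?_
  rw [home_of_half_le ht₁ ht₂]
  simp only [Bool.not_eq_true', decide_eq_false_iff_not]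
  omega

lemma loc_of_half_le_away (hev : Even n) {t x : ℕ} (ht₁ : n / 2 ≤ t) (ht₂ : t ≤ n - 2)
    (hx : x < n - 1) :
    loc n venue t ((2 * t + 1 + (n - 1) + x) % (2 * (n - 1)))
      = venue (if x = n - 2 then n - 1 else (t + 1 + x) % (n - 1)) := by
  have h2t : n ≤ 2 * t := by have := Nat.even_iff.mp hev; omega
  have hslot := mod_cases_of_lt_two_mul
    (show 2 * t + 1 + (n - 1) + x < 2 * (2 * (n - 1)) by omega)
  have hAway : Home n t ((2 * t + 1 + (n - 1) + x) % (2 * (n - 1))) = false := by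
    rw [home_of_half_le ht₁ ht₂]
    simp only [Bool.not_eq_false', decide_eq_true_eq]
    omega
  have hmod := mod_two_mul_modEq (2 * t + 1 + (n - 1) + x) (n - 1)
  by_cases hlast : x = n - 2
  · rw [loc_of_not_home venue hAway (y := 0) (by omega) (by omega), if_pos hlast, if_pos rfl]
    refine hmod.trans ?_
    rw [show 2 * t + 1 + (n - 1) + x = 2 * t + 0 + (n - 1) + (n - 1) by omega]
    exact Nat.add_modEq_right.trans Nat.add_modEq_right
  · rw [loc_of_not_home venue hAway (y := 1 + x) (by omega) (by omega), if_neg (by omega),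
      if_neg hlast, add_assoc]
    refine hmod.trans ?_
    rw [show 2 * t + 1 + (n - 1) + x = 2 * t + (1 + x) + (n - 1) by omega]
    exact Nat.add_modEq_right

variable (d : V → V → ℝ)

lemma tourLength_loc_of_lt_half (hdiag : ∀ v, d v v = 0) {t : ℕ} (ht : t < n / 2) :
    tourLength d (2 * (n - 1)) (loc n venue t) = tourLength d (n - 1) venue
      + insertionCost d (venue t) (venue (n - 1)) (venue ((t + 1) % (n - 1))) := by
  -- from the last home game: `v_t, v*, v_{t+1}, …, v_{t-1}, v_t, …, v_t`
  set g : ℕ → V := fun i => loc n venue t ((2 * t + (n - 2) + i) % (2 * (n - 1))) with hg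
  have hstart : g 0 = venue t := loc_of_lt_half_home venue ht (by omega)
  have hstar : g 1 = venue (n - 1) := by
    simpa [hg, show 2 * t + (n - 1) + 0 = 2 * t + (n - 2) + 1 by omega]
      using loc_of_lt_half_away venue ht (x := 0) (by omega)
  have hhome : ∀ j ≤ n - 2, g (n + j) = venue t := fun j hj => by
    simp only [hg]
    rw [show 2 * t + (n - 2) + (n + j) = 2 * t + j + 1 * (2 * (n - 1)) by omega,
      Nat.add_mul_mod_self_right, loc_of_lt_half_home venue ht (by omega)]
  have hroute : ∀ x ≤ n - 2, g (2 + x) = venue ((t + 1 + x) % (n - 1)) := by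
    intro x hx
    rcases hx.lt_or_eq with hx | rfl
    · simp only [hg]
      rw [show 2 * t + (n - 2) + (2 + x) = 2 * t + (n - 1) + (1 + x) by omega,
        loc_of_lt_half_away venue ht (by omega), if_neg (by omega), add_assoc]
    · rw [show 2 + (n - 2) = n + 0 by omega, hhome 0 (by omega),
        show t + 1 + (n - 2) = t + (n - 1) by omega, Nat.add_mod_right,
        Nat.mod_eq_of_lt (by omega)]
  have hstay : ∀ i ≤ n - 2, g (2 + (n - 2) + i) = g (2 + (n - 2)) := fun i hi => by
    rw [show 2 + (n - 2) + i = n + i by omega, show 2 + (n - 2) = n + 0 by omega,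
      hhome i hi, hhome 0 (by omega)]
  rw [tourLength_eq_pathLength d _ _ (2 * t + (n - 2)), ← hg,
    show 2 * (n - 1) = 2 + (n - 2) + (n - 2) by omega, pathLength_add_of_const d hdiag hstay,
    pathLength_add, pathLength_two, pathLength_congr d hroute, show n - 2 = n - 1 - 1 by omega,
    pathLength_rotate d venue (by omega), hstart, hstar, hroute 0 (by omega),
    Nat.mod_eq_of_lt (show t < n - 1 by omega), add_zero, insertionCost]
  ring

lemma tourLength_loc_of_half_le (hdiag : ∀ v, d v v = 0) (hn : 2 ≤ n) (hev : Even n) {t : ℕ}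
    (ht₁ : n / 2 ≤ t) (ht₂ : t ≤ n - 2) :
    tourLength d (2 * (n - 1)) (loc n venue t) = tourLength d (n - 1) venue
      + insertionCost d (venue (t - 1)) (venue (n - 1)) (venue t) := by
  -- from the last home game: `v_t, v_{t+1}, …, v_{t-1}, v*, v_t, …, v_t`
  set g : ℕ → V := fun i => loc n venue t ((2 * t + (n - 1) + i) % (2 * (n - 1))) with hg
  have hhome : ∀ j ≤ n - 2, g (n + j) = venue t := fun j hj => by
    simp only [hg]
    rw [show 2 * t + (n - 1) + (n + j) = 2 * t + 1 + j + 1 * (2 * (n - 1)) by omega,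
      Nat.add_mul_mod_self_right, loc_of_half_le_home venue ht₁ ht₂ (by omega)]
  have hroute : ∀ x ≤ n - 2, g x = venue ((t - 1 + 1 + x) % (n - 1)) := by
    intro x hx
    rcases Nat.eq_zero_or_pos x with rfl | hx
    · simp only [hg]
      rw [show 2 * t + (n - 1) + 0 = 2 * t + 1 + (n - 2) by omega,
        loc_of_half_le_home venue ht₁ ht₂ (by omega), Nat.mod_eq_of_lt (by omega)]
      congr 1
      omega
    · simp only [hg]
      rw [show 2 * t + (n - 1) + x = 2 * t + 1 + (n - 1) + (x - 1) by omega,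
        loc_of_half_le_away venue hev ht₁ ht₂ (by omega), if_neg (by omega)]
      congr 2
      omega
  have hstar : g (n - 1) = venue (n - 1) := by
    simp only [hg]
    rw [show 2 * t + (n - 1) + (n - 1) = 2 * t + 1 + (n - 1) + (n - 2) by omega,
      loc_of_half_le_away venue hev ht₁ ht₂ (by omega), if_pos rfl]
  have hstay : ∀ i ≤ n - 2, g (n - 2 + 2 + i) = g (n - 2 + 2) := fun i hi => by
    rw [show n - 2 + 2 + i = n + i by omega, show n - 2 + 2 = n + 0 by omega,
      hhome i hi, hhome 0 (by omega)]
  rw [tourLength_eq_pathLength d _ _ (2 * t + (n - 1)), ← hg,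
    show 2 * (n - 1) = n - 2 + 2 + (n - 2) by omega, pathLength_add_of_const d hdiag hstay,
    pathLength_add, pathLength_two, pathLength_congr d hroute,
    show n - 2 = n - 1 - 1 by omega, pathLength_rotate d venue (by omega),
    add_zero, show n - 1 - 1 + 1 = n - 1 by omega, show n - 1 - 1 + 2 = n + 0 by omega,
    hroute (n - 1 - 1) (by omega), hstar, hhome 0 (by omega),
    show t - 1 + 1 + (n - 1 - 1) = t - 1 + (n - 1) by omega, Nat.add_mod_right,
    Nat.mod_eq_of_lt (show t - 1 < n - 1 by omega), show t - 1 + 1 = t by omega,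
    Nat.mod_eq_of_lt (show t < n - 1 by omega), insertionCost]
  ring

lemma tourLength_loc_last_le (hdiag : ∀ v, d v v = 0) (hn : 2 ≤ n) {B : ℝ}
    (hB : ∀ u v, d u v ≤ B) : tourLength d (2 * (n - 1)) (loc n venue (n - 1)) ≤ n * B := by
  set g : ℕ → V := fun i => loc n venue (n - 1) ((n - 1 + i) % (2 * (n - 1))) with hg
  have hhome : ∀ i ≤ n - 2, g i = venue (n - 1) := by
    intro i hi
    simp only [hg]
    rw [Nat.mod_eq_of_lt (by omega), loc_of_home _ (by rw [home_last hn]; simp)]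
  rw [tourLength_eq_pathLength d _ _ (n - 1), ← hg, show 2 * (n - 1) = n - 2 + n by omega,
    pathLength_add, pathLength_eq_zero d hdiag hhome, zero_add]
  exact pathLength_le d hB _ n

lemma sum_tourLength_loc_of_lt (hdiag : ∀ v, d v v = 0) (hn : 4 ≤ n) (hev : Even n) :
    ∑ t ∈ range (n - 1), tourLength d (2 * (n - 1)) (loc n venue t)
      = ((n : ℝ) - 1) * tourLength d (n - 1) venue
        + ∑ k ∈ range (n - 2),
            insertionCost d (venue k) (venue (n - 1)) (venue ((k + 1) % (n - 1)))
        + insertionCost d (venue (n / 2 - 1)) (venue (n - 1)) (venue (n / 2)) := by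
  set G : ℕ → ℝ :=
    fun k => insertionCost d (venue k) (venue (n - 1)) (venue ((k + 1) % (n - 1)))
  have hteam : ∀ t ∈ range (n - 1), tourLength d (2 * (n - 1)) (loc n venue t)
      = tourLength d (n - 1) venue + G (if t < n / 2 then t else t - 1) := fun t ht => by
    rw [mem_range] at ht
    split_ifs with h
    · exact tourLength_loc_of_lt_half venue d hdiag h
    · rw [tourLength_loc_of_half_le venue d hdiag (by omega) hev (not_lt.mp h) (by omega)]
      simp only [G, show t - 1 + 1 = t by omega, Nat.mod_eq_of_lt (show t < n - 1 by omega)]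
  have hmid : G (n / 2 - 1)
      = insertionCost d (venue (n / 2 - 1)) (venue (n - 1)) (venue (n / 2)) := by
    simp only [G, show n / 2 - 1 + 1 = n / 2 by omega,
      Nat.mod_eq_of_lt (show n / 2 < n - 1 by omega)]
  rw [sum_congr rfl hteam, sum_add_distrib, sum_const, card_range, nsmul_eq_mul,
    sum_range_ite_pred G (by omega), show n - 1 - 1 = n - 2 by omega, hmid,
    Nat.cast_sub (by omega), Nat.cast_one, add_assoc]

end Schedule

theorem stmt_13_general {V : Type*} (n : ℕ) [NeZero n] (hn : 4 ≤ n) (hev : Even n)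
    (d : V → V → ℝ)
    (hdiag : ∀ v, d v v = 0)
    (hsymm : ∀ u v, d u v = d v u)
    (hnonneg : ∀ u v, 0 ≤ d u v)
    (htri : ∀ u v w, d u w ≤ d u v + d v w)
    (venue : ℕ → V)
    (τ τ' : ℝ)
    (hτ : IsLeast {L : ℝ | ∃ c : Fin n ≃ V, L = ∑ i : Fin n, d (c i) (c (i + 1))} τ)
    (hτ' : τ' = ∑ i ∈ Finset.range (n - 1), d (venue i) (venue ((i + 1) % (n - 1)))) :
    ∑ t ∈ Finset.range n, ∑ s ∈ Finset.range (2 * n - 2),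
        d (loc n venue t s) (loc n venue t ((s + 1) % (2 * n - 2)))
    ≤ ((n : ℝ) - 2) * τ' + 2 * (∑ i ∈ Finset.range (n - 1), d (venue i) (venue (n - 1)))
      + (3 / 2) * τ + (n : ℝ) * τ / 2 := by
  replace hτ' : τ' = tourLength d (n - 1) venue := hτ'
  obtain ⟨c, hc⟩ := hτ.1
  have hhalf : ∀ u v, d u v ≤ τ / 2 :=
    fun u v => hc ▸ dist_le_half_sum_cycle d hdiag hsymm htri c u v
  have hτ0 : 0 ≤ τ := by linarith [hhalf (venue 0) (venue 0), hdiag (venue 0)]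
  have hroute : ∑ k ∈ range (n - 2),
        insertionCost d (venue k) (venue (n - 1)) (venue ((k + 1) % (n - 1)))
      ≤ 2 * ∑ i ∈ range (n - 1), d (venue i) (venue (n - 1)) - τ' := by
    rw [hτ', ← sum_insertionCost d hsymm]
    exact sum_le_sum_of_subset_of_nonneg (range_mono (by omega))
      fun k _ _ => insertionCost_nonneg d htri _ _ _
  have hmid : insertionCost d (venue (n / 2 - 1)) (venue (n - 1)) (venue (n / 2)) ≤ τ := by
    unfold insertionCost
    linarith [hhalf (venue (n / 2 - 1)) (venue (n - 1)), hhalf (venue (n - 1)) (venue (n / 2)),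
      hnonneg (venue (n / 2 - 1)) (venue (n / 2))]
  have hlast := tourLength_loc_last_le venue d hdiag (n := n) (by omega) hhalf
  rw [show 2 * n - 2 = 2 * (n - 1) by omega]
  change ∑ t ∈ range n, tourLength d (2 * (n - 1)) (loc n venue t) ≤ _
  rw [show range n = range (n - 1 + 1) by rw [Nat.sub_add_cancel (by omega)], sum_range_succ,
    sum_tourLength_loc_of_lt venue d hdiag hn hev, ← hτ']
  linarith

theorem stmt_13 {V : Type*} [Fintype V] (n : ℕ) [NeZero n] (hn : 4 ≤ n) (hev : Even n)
    (hcard : Fintype.card V = n)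
    (d : V → V → ℝ)
    (hdiag : ∀ v, d v v = 0)
    (hsymm : ∀ u v, d u v = d v u)
    (hnonneg : ∀ u v, 0 ≤ d u v)
    (htri : ∀ u v w, d u w ≤ d u v + d v w)
    (venue : ℕ → V) (hbij : Set.BijOn venue (Set.Iio n) Set.univ)
    (τ τ' : ℝ)
    (hτ : IsLeast {L : ℝ | ∃ c : Fin n ≃ V, L = ∑ i : Fin n, d (c i) (c (i + 1))} τ)
    (hτ' : τ' = ∑ i ∈ Finset.range (n - 1), d (venue i) (venue ((i + 1) % (n - 1)))) :
    ∑ t ∈ Finset.range n, ∑ s ∈ Finset.range (2 * n - 2),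
        d (loc n venue t s) (loc n venue t ((s + 1) % (2 * n - 2)))
    ≤ ((n : ℝ) - 2) * τ' + 2 * (∑ i ∈ Finset.range (n - 1), d (venue i) (venue (n - 1)))
      + (3 / 2) * τ + (n : ℝ) * τ / 2 :=
  stmt_13_general n hn hev d hdiag hsymm hnonneg htri venue τ τ' hτ hτ'
end

section
/- For each team t with home venue v, the average over m ∈ {0,…,2n−3} of the traveling distance of team t in the rotated schedules K*_DRR(m) is at most ℓ_A(t) + (Σ_{v' ≠ v} d(v,v'))/(n−1), where ℓ_A(t) is the traveling distance of t in K*_DRR under Assumption A. -/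
open Finset

theorem sum_range_add_mod {M : Type*} [AddCommMonoid M] {L : ℕ} [NeZero L] (m : ℕ) (F : ℕ → M) :
    ∑ s ∈ range L, F ((s + m) % L) = ∑ s ∈ range L, F s := by
  rw [sum_range, sum_range]
  calc ∑ i : Fin L, F ((i + m) % L) = ∑ i : Fin L, F (i + Fin.ofNat L m : Fin L) := by
        simp [Fin.val_add]
    _ = ∑ i : Fin L, F i := Equiv.sum_comp (Equiv.addRight (Fin.ofNat L m)) (fun i => F i)

theorem sum_range_sub_one_le_sum_rotated_cycle {V : Type*} (d : V → V → ℝ)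
    (hnonneg : ∀ u v, 0 ≤ d u v) {L : ℕ} [NeZero L] (c : ℕ → V) (m : ℕ) :
    ∑ s ∈ range (L - 1), d (c ((s + m) % L)) (c ((s + 1 + m) % L))
      ≤ ∑ s ∈ range L, d (c s) (c ((s + 1) % L)) := by
  calc _ ≤ ∑ s ∈ range L, d (c ((s + m) % L)) (c ((s + 1 + m) % L)) :=
        sum_le_sum_of_subset_of_nonneg (range_subset_range.mpr (Nat.sub_le L 1))
          fun _ _ _ => hnonneg _ _
    _ = ∑ s ∈ range L, d (c ((s + m) % L)) (c (((s + m) % L + 1) % L)) := by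
        simp only [Nat.mod_add_mod, Nat.add_right_comm]
    _ = _ := sum_range_add_mod m fun s => d (c s) (c ((s + 1) % L))

theorem sum_rotated_tours_le {V : Type*} (d : V → V → ℝ) (hnonneg : ∀ u v, 0 ≤ d u v)
    {L : ℕ} [NeZero L] (c : ℕ → V) (v : V) :
    ∑ m ∈ range L, (d v (c (m % L))
        + ∑ s ∈ range (L - 1), d (c ((s + m) % L)) (c ((s + 1 + m) % L))
        + d (c ((L - 1 + m) % L)) v)
      ≤ L * ∑ s ∈ range L, d (c s) (c ((s + 1) % L))
        + (∑ s ∈ range L, d v (c s) + ∑ s ∈ range L, d (c s) v) := by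
  have hfirst : ∑ m ∈ range L, d v (c (m % L)) = ∑ s ∈ range L, d v (c s) := by
    simpa using sum_range_add_mod 0 fun s => d v (c s)
  have hlast : ∑ m ∈ range L, d (c ((L - 1 + m) % L)) v = ∑ s ∈ range L, d (c s) v := by
    simpa only [Nat.add_comm] using sum_range_add_mod (L - 1) fun s => d (c s) v
  calc _ ≤ ∑ m ∈ range L, (d v (c (m % L)) + ∑ s ∈ range L, d (c s) (c ((s + 1) % L))
          + d (c ((L - 1 + m) % L)) v) := by
        gcongr with m
        exact sum_range_sub_one_le_sum_rotated_cycle d hnonneg c m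
    _ = _ := by
        rw [sum_add_distrib, sum_add_distrib, hfirst, hlast, sum_const, card_range, nsmul_eq_mul]
        ring

theorem kstar_of_lt {n t : ℕ} (ht : t < n - 1) (s : ℕ) :
    Kstar n t s = if (s + (n - 1 - t)) % (n - 1) = t then n - 1
      else (s + (n - 1 - t)) % (n - 1) := by
  have hres : (((s : ℤ) - t) % ((n : ℤ) - 1)).toNat = (s + (n - 1 - t)) % (n - 1) := by
    have hcast : (((s + (n - 1 - t)) % (n - 1) : ℕ) : ℤ) = ((s : ℤ) - t) % ((n : ℤ) - 1) := by
      push_cast [Nat.cast_sub (by omega : t ≤ n - 1), Nat.cast_sub (by omega : 1 ≤ n)]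
      rw [show (s : ℤ) + ((n : ℤ) - 1 - t) = (s - t) + ((n : ℤ) - 1) by ring, Int.add_emod_right]
    rw [← hcast, Int.toNat_natCast]
  simp only [Kstar, if_neg (show t ≠ n - 1 by omega), hres]

theorem kstar_injOn {n t : ℕ} (hev : Even n) (ht : t < n) :
    Set.InjOn (Kstar n t) (range (n - 1)) := by
  intro s₁ hs₁ s₂ hs₂ heq
  simp only [coe_range, Set.mem_Iio] at hs₁ hs₂
  obtain ⟨k, rfl⟩ := hev
  by_cases htn : t = k + k - 1
  · subst htn
    simp only [Kstar, if_true] at heq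
    split_ifs at heq <;> omega
  · rw [kstar_of_lt (by omega), kstar_of_lt (by omega)] at heq
    have hr : (s₁ + (k + k - 1 - t)) % (k + k - 1) = (s₂ + (k + k - 1 - t)) % (k + k - 1) := by
      have := Nat.mod_lt (s₁ + (k + k - 1 - t)) (show 0 < k + k - 1 by omega)
      have := Nat.mod_lt (s₂ + (k + k - 1 - t)) (show 0 < k + k - 1 by omega)
      split_ifs at heq <;> omega
    have := Nat.ModEq.add_right_cancel' _ hr
    rwa [Nat.ModEq, Nat.mod_eq_of_lt hs₁, Nat.mod_eq_of_lt hs₂] at this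

theorem kstar_mapsTo {n t : ℕ} (hn : 2 ≤ n) (ht : t < n) :
    Set.MapsTo (Kstar n t) (range (n - 1)) ((range n).erase t) := by
  intro s hs
  simp only [coe_range, Set.mem_Iio, coe_erase, Set.mem_sdiff, Set.mem_singleton_iff] at hs ⊢
  by_cases htn : t = n - 1
  · subst htn
    simp only [Kstar, if_true]
    split_ifs <;> omega
  · rw [kstar_of_lt (by omega)]
    have := Nat.mod_lt (s + (n - 1 - t)) (show 0 < n - 1 by omega)
    split_ifs <;> omega

theorem kstar_bijOn {n t : ℕ} (hn : 2 ≤ n) (hev : Even n) (ht : t < n) :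
    Set.BijOn (Kstar n t) (range (n - 1)) ((range n).erase t) :=
  ⟨kstar_mapsTo hn ht, kstar_injOn hev ht,
    surjOn_of_injOn_of_card_le _ (kstar_mapsTo hn ht) (kstar_injOn hev ht)
      (by rw [card_erase_of_mem (mem_range.mpr ht), card_range, card_range])⟩

theorem home_add_sub_one {n t s : ℕ} (hev : Even n) (ht : t < n) (hs : s < n - 1) :
    Home n t (s + (n - 1)) = !Home n t s := by
  obtain ⟨k, rfl⟩ := hev
  unfold Home
  split_ifs <;> rw [Bool.eq_iff_iff] <;>
    simp only [Bool.decide_and, Bool.and_eq_true, Bool.not_and, Bool.not_or, Bool.or_eq_true,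
      Bool.not_not, Bool.not_eq_eq_eq_not, Bool.not_true, decide_eq_true_eq, decide_eq_false_iff_not,
      not_le] <;> omega

theorem sum_range_loc {V M : Type*} [AddCommMonoid M] {n t : ℕ} (hev : Even n) (ht : t < n)
    (venue : ℕ → V) (g : V → M) (hg : g (venue t) = 0) :
    ∑ s ∈ range (2 * n - 2), g (loc n venue t s)
      = ∑ s ∈ range (n - 1), g (venue (Kstar n t s)) := by
  rw [show 2 * n - 2 = n - 1 + (n - 1) by omega, sum_range_add, ← sum_add_distrib]
  refine sum_congr rfl fun s hs => ?_
  have hs : s < n - 1 := mem_range.mp hs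
  have hmod : (s + (n - 1)) % (n - 1) = s := by rw [Nat.add_mod_right, Nat.mod_eq_of_lt hs]
  rw [Nat.add_comm (n - 1) s]
  unfold loc
  rw [home_add_sub_one hev ht hs, hmod, Nat.mod_eq_of_lt hs]
  cases Home n t s <;> simp [hg]

theorem sum_range_loc_eq_sum_erase {V M : Type*} [Fintype V] [DecidableEq V] [AddCommMonoid M]
    {n t : ℕ} (hn : 2 ≤ n) (hev : Even n) (ht : t < n) {venue : ℕ → V}
    (hbij : Set.BijOn venue (Set.Iio n) Set.univ) (g : V → M) (hg : g (venue t) = 0) :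
    ∑ s ∈ range (2 * n - 2), g (loc n venue t s) = ∑ x ∈ univ.erase (venue t), g x := by
  have hvenue : Set.BijOn venue ((range n).erase t) (univ.erase (venue t)) := by
    simpa using hbij.sdiff_singleton (Set.mem_Iio.mpr ht)
  have h := hvenue.comp (kstar_bijOn hn hev ht)
  rw [sum_range_loc hev ht venue g hg]
  exact sum_nbij _ (fun s hs => h.mapsTo hs) h.injOn h.surjOn fun _ _ => rfl

theorem stmt_14_general {V : Type*} [Fintype V] [DecidableEq V] (n : ℕ) (hn : 4 ≤ n) (hev : Even n)
    (d : V → V → ℝ)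
    (hdiag : ∀ v, d v v = 0)
    (hsymm : ∀ u v, d u v = d v u)
    (hnonneg : ∀ u v, 0 ≤ d u v)
    (venue : ℕ → V) (hbij : Set.BijOn venue (Set.Iio n) Set.univ)
    (t : ℕ) (ht : t < n) :
    (∑ m ∈ Finset.range (2 * n - 2),
        (d (venue t) (loc n venue t (m % (2 * n - 2)))
          + (∑ s ∈ Finset.range (2 * n - 3),
              d (loc n venue t ((s + m) % (2 * n - 2)))
                (loc n venue t ((s + 1 + m) % (2 * n - 2))))
          + d (loc n venue t ((2 * n - 3 + m) % (2 * n - 2))) (venue t)))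
      / ((2 : ℝ) * n - 2)
    ≤ (∑ s ∈ Finset.range (2 * n - 2),
        d (loc n venue t s) (loc n venue t ((s + 1) % (2 * n - 2))))
      + (∑ x ∈ Finset.univ.erase (venue t), d (venue t) x) / ((n : ℝ) - 1) := by
  have : NeZero (2 * n - 2) := ⟨by omega⟩
  have hfirst := sum_range_loc_eq_sum_erase (by omega) hev ht hbij (d (venue t)) (hdiag _)
  have hlast : ∑ s ∈ range (2 * n - 2), d (loc n venue t s) (venue t)
      = ∑ x ∈ univ.erase (venue t), d (venue t) x := by
    rw [sum_range_loc_eq_sum_erase (by omega) hev ht hbij (d · (venue t)) (hdiag _)]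
    exact sum_congr rfl fun x _ => hsymm x (venue t)
  have htours := sum_rotated_tours_le d hnonneg (L := 2 * n - 2) (loc n venue t) (venue t)
  rw [show 2 * n - 2 - 1 = 2 * n - 3 by omega, hfirst, hlast] at htours
  have hL : ((2 * n - 2 : ℕ) : ℝ) = 2 * (n - 1 : ℝ) := by
    rw [Nat.cast_sub (by omega)]; push_cast; ring
  have hn1 : (0 : ℝ) < n - 1 := by
    rw [sub_pos, Nat.one_lt_cast]; omega
  rw [hL] at htours
  rw [div_le_iff₀ (by linarith)]
  exact htours.trans_eq (by field_simp; ring)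

theorem stmt_14 {V : Type*} [Fintype V] [DecidableEq V] (n : ℕ) (hn : 4 ≤ n) (hev : Even n)
    (hcard : Fintype.card V = n)
    (d : V → V → ℝ)
    (hdiag : ∀ v, d v v = 0)
    (hsymm : ∀ u v, d u v = d v u)
    (hnonneg : ∀ u v, 0 ≤ d u v)
    (htri : ∀ u v w, d u w ≤ d u v + d v w)
    (venue : ℕ → V) (hbij : Set.BijOn venue (Set.Iio n) Set.univ)
    (t : ℕ) (ht : t < n) :
    (∑ m ∈ Finset.range (2 * n - 2),
        (d (venue t) (loc n venue t (m % (2 * n - 2)))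
          + (∑ s ∈ Finset.range (2 * n - 3),
              d (loc n venue t ((s + m) % (2 * n - 2)))
                (loc n venue t ((s + 1 + m) % (2 * n - 2))))
          + d (loc n venue t ((2 * n - 3 + m) % (2 * n - 2))) (venue t)))
      / ((2 : ℝ) * n - 2)
    ≤ (∑ s ∈ Finset.range (2 * n - 2),
        d (loc n venue t s) (loc n venue t ((s + 1) % (2 * n - 2))))
      + (∑ x ∈ Finset.univ.erase (venue t), d (venue t) x) / ((n : ℝ) - 1) :=
  stmt_14_general n hn hev d hdiag hsymm hnonneg venue hbij t ht
end
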